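/- arXiv:0908.1129 — 6 statements merged into one kernel-verified Lean document; each statement's English description precedes it below -/
import Mathlib

section
/- If σ : ℝ → ℝ is continuous with 0 < σ_min ≤ σ(t) ≤ σ_max for all t, then the improper integral γ(t)² := (2 ∫_{−∞}^t e^{−2∫_k^t σ(s) ds} dk)^{−1} is well defined (the integral converges and is positive), and the functions γ_{1,2}(t) = ±√(γ(t)²) are solutions of ẋ = x(σ(t) − x²). -/
open MeasureTheory Real Set intervalIntegral

/-!
Writing `S` for a primitive of `σ`, the integral is `F t = e^{-2 S t} ∫_{-∞}^t e^{2 S k} dk`; it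
converges because `S t - S k ≥ σmin (t - k)`, and it solves the linear equation
`F' = 1 - 2 σ F`. The Bernoulli substitution `u = 1 / (2 F)` turns this into the logistic equation
`u' = 2 u (σ - u)`, whence `√u` solves `ẋ = x (σ - x²)`, and so does `-√u` since the equation is
odd in `x`.
-/

theorem hasDerivAt_setIntegral_Iic {E : Type*} [NormedAddCommGroup E] [NormedSpace ℝ E]
    [CompleteSpace E] {g : ℝ → E} (hg : Continuous g) (hint : ∀ t, IntegrableOn g (Iic t))
    (t : ℝ) : HasDerivAt (fun t => ∫ k in Iic t, g k) (g t) t := by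
  have hsplit : (fun t => ∫ k in Iic t, g k) = fun y => (∫ k in Iic 0, g k) + ∫ k in 0..y, g k := by
    funext y
    rw [← integral_Iic_sub_Iic (hint 0) (hint y), add_sub_cancel]
  rw [hsplit]
  exact (integral_hasDerivAt_right (hg.intervalIntegrable 0 t)
    (hg.stronglyMeasurableAtFilter _ _) hg.continuousAt).const_add _

theorem integrableOn_Iic_exp_of_linear_growth {S : ℝ → ℝ} (hS : Continuous S) {c t : ℝ}
    (hc : 0 < c) (hgrowth : ∀ k ≤ t, c * (t - k) ≤ S t - S k) :
    IntegrableOn (fun k => exp (S k)) (Iic t) := by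
  refine ((integrableOn_exp_mul_Iic hc t).const_mul (exp (S t - c * t))).mono'
    hS.rexp.aestronglyMeasurable.restrict ?_
  refine (ae_restrict_iff' measurableSet_Iic).2 (.of_forall fun k hk => ?_)
  rw [norm_of_nonneg (exp_pos _).le, ← exp_add]
  exact exp_le_exp.2 (by linarith [hgrowth k hk])

theorem mul_sub_le_integral_of_forall_le {σ : ℝ → ℝ} {c k t : ℝ}
    (hσ : IntervalIntegrable σ volume k t) (hkt : k ≤ t) (hc : ∀ s, c ≤ σ s) : c * (t - k) ≤ ∫ s in k..t, σ s := by
  simpa [mul_comm] using integral_mono_on hkt intervalIntegrable_const hσ fun s _ => hc s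

theorem HasDerivAt.one_div_two_mul_of_linear {F : ℝ → ℝ} {a t : ℝ}
    (hF : HasDerivAt F (1 - 2 * a * F t) t) (hFt : F t ≠ 0) :
    HasDerivAt (fun y => 1 / (2 * F y)) (2 * (1 / (2 * F t)) * (a - 1 / (2 * F t))) t := by
  refine ((hasDerivAt_const t (1 : ℝ)).fun_div (hF.const_mul 2) (by simpa using hFt)).congr_deriv ?_
  field_simp
  ring

theorem HasDerivAt.sqrt_of_logistic {u : ℝ → ℝ} {a t : ℝ}
    (hu : HasDerivAt u (2 * u t * (a - u t)) t) (hut : 0 < u t) :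
    HasDerivAt (fun y => √(u y)) (√(u t) * (a - √(u t) ^ 2)) t := by
  convert hu.sqrt hut.ne' using 1
  have hsqrt : 0 < √(u t) := sqrt_pos.2 hut
  rw [sq_sqrt hut.le]
  field_simp
  rw [sq_sqrt hut.le]

theorem exp_neg_two_mul_integral_eq {σ : ℝ → ℝ} (hσ : Continuous σ) (k t : ℝ) :
    exp (-2 * ∫ s in k..t, σ s) = exp (-2 * ∫ s in 0..t, σ s) * exp (2 * ∫ s in 0..k, σ s) := by
  rw [← integral_interval_sub_left (hσ.intervalIntegrable 0 t) (hσ.intervalIntegrable 0 k),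
    ← exp_add]
  ring_nf

theorem integrableOn_Iic_exp_two_mul_primitive {σ : ℝ → ℝ} (hσ : Continuous σ) {c : ℝ}
    (hc : 0 < c) (hσc : ∀ s, c ≤ σ s) (t : ℝ) :
    IntegrableOn (fun k => exp (2 * ∫ s in 0..k, σ s)) (Iic t) := by
  have hS : Continuous fun k => 2 * ∫ s in 0..k, σ s :=
    continuous_const.mul (continuous_primitive hσ.intervalIntegrable 0)
  refine integrableOn_Iic_exp_of_linear_growth hS (mul_pos two_pos hc) fun k hk => ?_
  rw [← mul_sub, integral_interval_sub_left (hσ.intervalIntegrable 0 t) (hσ.intervalIntegrable 0 k),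
    mul_assoc]
  exact mul_le_mul_of_nonneg_left
    (mul_sub_le_integral_of_forall_le (hσ.intervalIntegrable k t) hk hσc) zero_le_two

theorem setIntegral_Iic_exp_neg_two_mul_integral_eq {σ : ℝ → ℝ} (hσ : Continuous σ) (t : ℝ) :
    ∫ k in Iic t, exp (-2 * ∫ s in k..t, σ s) =
      exp (-2 * ∫ s in 0..t, σ s) * ∫ k in Iic t, exp (2 * ∫ s in 0..k, σ s) := by
  rw [funext fun k => exp_neg_two_mul_integral_eq hσ k t, MeasureTheory.integral_const_mul]

theorem integrableOn_Iic_exp_neg_two_mul_integral {σ : ℝ → ℝ} (hσ : Continuous σ) {c : ℝ}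
    (hc : 0 < c) (hσc : ∀ s, c ≤ σ s) (t : ℝ) :
    IntegrableOn (fun k => exp (-2 * ∫ s in k..t, σ s)) (Iic t) := by
  rw [funext fun k => exp_neg_two_mul_integral_eq hσ k t]
  exact (integrableOn_Iic_exp_two_mul_primitive hσ hc hσc t).const_mul _

theorem setIntegral_Iic_exp_neg_two_mul_integral_pos {σ : ℝ → ℝ} (hσ : Continuous σ) {c : ℝ}
    (hc : 0 < c) (hσc : ∀ s, c ≤ σ s) (t : ℝ) :
    0 < ∫ k in Iic t, exp (-2 * ∫ s in k..t, σ s) := by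
  have : NeZero (volume.restrict (Iic t)) := ⟨by simp⟩
  exact integral_exp_pos (integrableOn_Iic_exp_neg_two_mul_integral hσ hc hσc t)

theorem hasDerivAt_setIntegral_Iic_exp_neg_two_mul_integral {σ : ℝ → ℝ} (hσ : Continuous σ)
    {c : ℝ} (hc : 0 < c) (hσc : ∀ s, c ≤ σ s) (t : ℝ) :
    HasDerivAt (fun t => ∫ k in Iic t, exp (-2 * ∫ s in k..t, σ s))
      (1 - 2 * σ t * ∫ k in Iic t, exp (-2 * ∫ s in k..t, σ s)) t := by
  have hS : HasDerivAt (fun t => ∫ s in 0..t, σ s) (σ t) t :=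
    integral_hasDerivAt_right (hσ.intervalIntegrable 0 t) (hσ.stronglyMeasurableAtFilter _ _)
      hσ.continuousAt
  have hexp : Continuous fun k => exp (2 * ∫ s in 0..k, σ s) :=
    (continuous_const.mul (continuous_primitive hσ.intervalIntegrable 0)).rexp
  have hP := hasDerivAt_setIntegral_Iic hexp (integrableOn_Iic_exp_two_mul_primitive hσ hc hσc) t
  rw [funext (setIntegral_Iic_exp_neg_two_mul_integral_eq hσ)]
  refine ((hS.const_mul (-2)).exp.mul hP).congr_deriv ?_
  have hinv : exp (-2 * ∫ s in 0..t, σ s) * exp (2 * ∫ s in 0..t, σ s) = 1 := by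
    rw [← exp_add, neg_mul, neg_add_cancel, exp_zero]
  rw [setIntegral_Iic_exp_neg_two_mul_integral_eq hσ t]
  linear_combination hinv

theorem stmt2_general (σ : ℝ → ℝ) (hσ : Continuous σ) (σmin : ℝ)
    (h1 : 0 < σmin) (h2 : ∀ t, σmin ≤ σ t) :
    (∀ t, IntegrableOn (fun k => Real.exp (-2 * ∫ s in k..t, σ s)) (Set.Iic t)) ∧
    (∀ t, 0 < ∫ k in Set.Iic t, Real.exp (-2 * ∫ s in k..t, σ s)) ∧
    (∀ γ : ℝ → ℝ,
      (∀ t, γ t = Real.sqrt (1 / (2 * ∫ k in Set.Iic t, Real.exp (-2 * ∫ s in k..t, σ s)))) →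
      ∀ t, HasDerivAt γ (γ t * (σ t - (γ t) ^ 2)) t) ∧
    (∀ γ : ℝ → ℝ,
      (∀ t, γ t = -Real.sqrt (1 / (2 * ∫ k in Set.Iic t, Real.exp (-2 * ∫ s in k..t, σ s)))) →
      ∀ t, HasDerivAt γ (γ t * (σ t - (γ t) ^ 2)) t) := by
  have hpos := setIntegral_Iic_exp_neg_two_mul_integral_pos hσ h1 h2
  have hsqrt (t : ℝ) :=
    ((hasDerivAt_setIntegral_Iic_exp_neg_two_mul_integral hσ h1 h2 t).one_div_two_mul_of_linear
      (hpos t).ne').sqrt_of_logistic (by have := hpos t; positivity)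
  refine ⟨integrableOn_Iic_exp_neg_two_mul_integral hσ h1 h2, hpos, fun γ hγ t => ?_,
    fun γ hγ t => ?_⟩
  · rw [funext hγ]
    exact hsqrt t
  · rw [funext hγ]
    exact (hsqrt t).neg.congr_deriv (by ring)

/-- Under `0 < σmin ≤ σ(t) ≤ σmax`, the improper integral defining `γ(t)²` converges and is
positive, and the distinguished trajectories `γ₁,₂(t) = ±√(γ(t)²)` solve `ẋ = x(σ(t) - x²)`. -/
theorem stmt2 (σ : ℝ → ℝ) (hσ : Continuous σ) (σmin σmax : ℝ)
    (h1 : 0 < σmin) (h2 : ∀ t, σmin ≤ σ t) (h3 : ∀ t, σ t ≤ σmax) :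
    (∀ t, IntegrableOn (fun k => Real.exp (-2 * ∫ s in k..t, σ s)) (Set.Iic t)) ∧
    (∀ t, 0 < ∫ k in Set.Iic t, Real.exp (-2 * ∫ s in k..t, σ s)) ∧
    (∀ γ : ℝ → ℝ,
      (∀ t, γ t = Real.sqrt (1 / (2 * ∫ k in Set.Iic t, Real.exp (-2 * ∫ s in k..t, σ s)))) →
      ∀ t, HasDerivAt γ (γ t * (σ t - (γ t) ^ 2)) t) ∧
    (∀ γ : ℝ → ℝ,
      (∀ t, γ t = -Real.sqrt (1 / (2 * ∫ k in Set.Iic t, Real.exp (-2 * ∫ s in k..t, σ s)))) →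
      ∀ t, HasDerivAt γ (γ t * (σ t - (γ t) ^ 2)) t) :=
  stmt2_general σ hσ σmin h1 h2
end

section
/- Under the assumption 0 < σ_min ≤ σ(t) ≤ σ_max, every solution x(t, x_0, t_0) of ẋ = x(σ(t) − x²) with x_0 > 0 satisfies lim_{t→∞} (x(t, x_0, t_0) − γ_1(t)) = 0, where γ_1(t) = +√(γ(t)²) is the positive distinguished trajectory; i.e. γ_1 is forwards attracting on the half-line x_0 > 0. -/
/-!
Substituting `y = x⁻²` turns `ẋ = x(σ - x²)` into the linear equation `ẏ = 2 - 2σy`: with the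
integrating factor `F(t) = exp (2 ∫_{t₀}^t σ)` one gets `(yF)' = 2F`. Since
`exp (-2 ∫_k^t σ) = F(k) / F(t)`, also `γ(t)⁻² = 2 ∫_{-∞}^t F / F(t)`, so `x⁻² - γ⁻²` equals a
constant divided by `F(t) ≥ exp (2σmin (t - t₀))`, and tends to `0`. As `γ⁻² ≥ 1 / σmax` stays
away from `0` and `w ↦ w^{-1/2}` is Lipschitz on `[c, ∞)`, `x - γ₁ → 0`. Positivity of `x`, needed
for the substitution, comes from `x(t) = x₀ exp ∫_{t₀}^t (σ - x²)`.
-/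

open MeasureTheory Real

open Set Filter Topology

lemma integrableOn_exp_mul_sub_Iic {a : ℝ} (ha : 0 < a) (t : ℝ) :
    IntegrableOn (fun k => exp (a * (k - t))) (Iic t) := by
  simp only [mul_sub, exp_sub]
  exact (integrableOn_exp_mul_Iic ha t).div_const _

lemma integral_exp_mul_sub_Iic {a : ℝ} (ha : 0 < a) (t : ℝ) :
    ∫ k in Iic t, exp (a * (k - t)) = 1 / a := by
  simp only [mul_sub, exp_sub, integral_div, integral_exp_mul_Iic ha]
  field_simp

lemma abs_inv_sqrt_sub_inv_sqrt_le {u v c : ℝ} (hc : 0 < c) (hu : c ≤ u) (hv : c ≤ v) :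
    |(√u)⁻¹ - (√v)⁻¹| ≤ |u - v| / (2 * c * √c) := by
  have hcu : √c ≤ √u := sqrt_le_sqrt hu
  have hcv : √c ≤ √v := sqrt_le_sqrt hv
  have hc' : 0 < √c := sqrt_pos.2 hc
  have hu' : 0 < √u := hc'.trans_le hcu
  have hv' : 0 < √v := hc'.trans_le hcv
  have hsub : (√u)⁻¹ - (√v)⁻¹ = (v - u) / (√u * √v * (√u + √v)) := by
    field_simp
    linear_combination mul_self_sqrt (hc.le.trans hv) - mul_self_sqrt (hc.le.trans hu)
  rw [hsub, abs_div, abs_sub_comm, abs_of_pos (mul_pos (mul_pos hu' hv') (add_pos hu' hv'))]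
  refine div_le_div_of_nonneg_left (abs_nonneg _) (by positivity) ?_
  calc 2 * c * √c = √c * √c * (√c + √c) := by rw [mul_self_sqrt hc.le]; ring
    _ ≤ √u * √v * (√u + √v) := by gcongr

lemma tendsto_inv_sqrt_sub_inv_sqrt {α : Type*} {l : Filter α} {u v : α → ℝ} {c : ℝ}
    (hc : 0 < c) (hv : ∀ᶠ a in l, c ≤ v a) (huv : Tendsto (fun a => u a - v a) l (𝓝 0)) :
    Tendsto (fun a => (√(u a))⁻¹ - (√(v a))⁻¹) l (𝓝 0) := by
  have hsmall : ∀ᶠ a in l, |u a - v a| ≤ c / 2 :=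
    (tendsto_zero_iff_abs_tendsto_zero _).1 huv |>.eventually (eventually_le_nhds (by positivity))
  refine squeeze_zero_norm' ?_
    (by simpa only [abs_zero, zero_div] using huv.abs.div_const (2 * (c / 2) * √(c / 2)))
  filter_upwards [hv, hsmall] with a hva hsa
  have hua : c / 2 ≤ u a := by linarith [neg_abs_le (u a - v a)]
  have hva' : c / 2 ≤ v a := by linarith
  rw [norm_eq_abs]
  exact abs_inv_sqrt_sub_inv_sqrt_le (half_pos hc) hua hva'

lemma eq_mul_exp_integral_of_hasDerivAt {x a : ℝ → ℝ} {t0 t : ℝ} (ha : Continuous a)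
    (hx : ∀ s, t0 ≤ s → HasDerivAt x (x s * a s) s) (ht : t0 ≤ t) :
    x t = x t0 * exp (∫ s in t0..t, a s) := by
  set A := fun t => ∫ s in t0..t, a s
  have hA : ∀ s, HasDerivAt A (a s) s := fun s =>
    intervalIntegral.integral_hasDerivAt_right (ha.intervalIntegrable t0 s)
      (ha.stronglyMeasurableAtFilter _ _) ha.continuousAt
  have hderiv : ∀ s, t0 ≤ s → HasDerivAt (fun s => x s * exp (-A s)) 0 s := fun s hs => by
    refine ((hx s hs).mul (hA s).neg.exp).congr_deriv ?_
    ring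
  have hconst : x t * exp (-A t) = x t0 * exp (-A t0) :=
    constant_of_has_deriv_right_zero (fun s hs => (hderiv s hs.1).continuousAt.continuousWithinAt)
      (fun s hs => (hderiv s hs.1).hasDerivWithinAt) t ⟨ht, le_rfl⟩
  simp only [A, intervalIntegral.integral_same, neg_zero, exp_zero, mul_one] at hconst
  rw [← hconst, mul_assoc, ← exp_add, neg_add_cancel, exp_zero, mul_one]

lemma mul_sub_le_integral {f : ℝ → ℝ} {a b c : ℝ} (hf : IntervalIntegrable f volume a b)
    (hab : a ≤ b) (h : ∀ s ∈ Icc a b, c ≤ f s) : c * (b - a) ≤ ∫ s in a..b, f s := by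
  simpa [mul_comm] using intervalIntegral.integral_mono_on hab intervalIntegrable_const hf h

lemma integral_le_mul_sub {f : ℝ → ℝ} {a b c : ℝ} (hf : IntervalIntegrable f volume a b)
    (hab : a ≤ b) (h : ∀ s ∈ Icc a b, f s ≤ c) : ∫ s in a..b, f s ≤ c * (b - a) := by
  simpa [mul_comm] using intervalIntegral.integral_mono_on hab hf intervalIntegrable_const h

noncomputable def integratingFactor (σ : ℝ → ℝ) (t0 t : ℝ) : ℝ := exp (2 * ∫ s in t0..t, σ s)

section IntegratingFactor

variable {σ : ℝ → ℝ} {t0 c : ℝ}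

lemma integratingFactor_pos (t : ℝ) : 0 < integratingFactor σ t0 t := exp_pos _

lemma integratingFactor_self : integratingFactor σ t0 t0 = 1 := by
  simp [integratingFactor]

lemma hasDerivAt_integratingFactor (hσ : Continuous σ) (t : ℝ) :
    HasDerivAt (integratingFactor σ t0) (2 * σ t * integratingFactor σ t0 t) t := by
  have hS := intervalIntegral.integral_hasDerivAt_right (hσ.intervalIntegrable t0 t)
    (hσ.stronglyMeasurableAtFilter _ _) hσ.continuousAt
  exact (hS.const_mul 2).exp.congr_deriv (by unfold integratingFactor; ring)

lemma continuous_integratingFactor (hσ : Continuous σ) : Continuous (integratingFactor σ t0) :=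
  continuous_iff_continuousAt.2 fun t => (hasDerivAt_integratingFactor hσ t).continuousAt

lemma exp_neg_two_integral_eq_div (hσ : Continuous σ) (k t : ℝ) :
    exp (-2 * ∫ s in k..t, σ s) = integratingFactor σ t0 k / integratingFactor σ t0 t := by
  rw [integratingFactor, integratingFactor, ← exp_sub, ← intervalIntegral.integral_interval_sub_left
    (hσ.intervalIntegrable t0 t) (hσ.intervalIntegrable t0 k)]
  ring_nf

lemma integratingFactor_le_mul_exp (hσ : Continuous σ) (h : ∀ s, c ≤ σ s) {k t : ℝ}
    (hkt : k ≤ t) :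
    integratingFactor σ t0 k ≤ integratingFactor σ t0 t * exp (2 * c * (k - t)) := by
  rw [← div_le_iff₀' (integratingFactor_pos t), ← exp_neg_two_integral_eq_div hσ, exp_le_exp]
  linarith [mul_sub_le_integral (hσ.intervalIntegrable k t) hkt fun s _ => h s]

lemma mul_exp_le_integratingFactor (hσ : Continuous σ) (h : ∀ s, σ s ≤ c) {k t : ℝ}
    (hkt : k ≤ t) :
    integratingFactor σ t0 t * exp (2 * c * (k - t)) ≤ integratingFactor σ t0 k := by
  rw [← le_div_iff₀' (integratingFactor_pos t), ← exp_neg_two_integral_eq_div hσ, exp_le_exp]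
  linarith [integral_le_mul_sub (hσ.intervalIntegrable k t) hkt fun s _ => h s]

lemma integrableOn_integratingFactor_Iic (hσ : Continuous σ) (hc : 0 < c) (h : ∀ s, c ≤ σ s)
    (t : ℝ) : IntegrableOn (integratingFactor σ t0) (Iic t) := by
  refine Integrable.mono' (((integrableOn_exp_mul_sub_Iic (a := 2 * c) (by positivity) t).const_mul
    (integratingFactor σ t0 t))) (continuous_integratingFactor hσ).aestronglyMeasurable.restrict ?_
  rw [ae_restrict_iff' measurableSet_Iic]
  filter_upwards with k hk
  rw [norm_of_nonneg (integratingFactor_pos k).le]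
  exact integratingFactor_le_mul_exp hσ h hk

lemma div_le_integral_integratingFactor (hσ : Continuous σ) (hc : 0 < c) (h : ∀ s, σ s ≤ c)
    {t : ℝ} (hint : IntegrableOn (integratingFactor σ t0) (Iic t)) :
    integratingFactor σ t0 t / (2 * c) ≤ ∫ k in Iic t, integratingFactor σ t0 k := by
  calc integratingFactor σ t0 t / (2 * c)
      = ∫ k in Iic t, integratingFactor σ t0 t * exp (2 * c * (k - t)) := by
        rw [integral_const_mul, integral_exp_mul_sub_Iic (by positivity)]
        ring
    _ ≤ ∫ k in Iic t, integratingFactor σ t0 k :=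
        setIntegral_mono_on ((integrableOn_exp_mul_sub_Iic (by positivity) t).const_mul _) hint
          measurableSet_Iic fun k hk => mul_exp_le_integratingFactor hσ h hk

lemma tendsto_integratingFactor_atTop (hσ : Continuous σ) (hc : 0 < c) (h : ∀ s, c ≤ σ s) :
    Tendsto (integratingFactor σ t0) atTop atTop := by
  have hexp : Tendsto (fun t => exp (2 * c * (t - t0))) atTop atTop :=
    tendsto_exp_atTop.comp <| (tendsto_atTop_add_const_right _ _ tendsto_id).const_mul_atTop
      (by positivity)
  refine tendsto_atTop_mono' _ ?_ hexp
  filter_upwards [eventually_ge_atTop t0] with t ht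
  have hle := mul_le_mul_of_nonneg_left (integratingFactor_le_mul_exp (t0 := t0) hσ h ht)
    (exp_pos (2 * c * (t - t0))).le
  rwa [integratingFactor_self, mul_one, mul_left_comm, ← exp_add,
    show 2 * c * (t - t0) + 2 * c * (t0 - t) = 0 by ring, exp_zero, mul_one] at hle

end IntegratingFactor

section Pitchfork

variable {σ x : ℝ → ℝ} {t0 : ℝ}

lemma pos_of_hasDerivAt_mul_sub_sq (hσ : Continuous σ) (hx0 : 0 < x t0)
    (hx : ∀ t, t0 ≤ t → HasDerivAt x (x t * (σ t - x t ^ 2)) t) {t : ℝ} (ht : t0 ≤ t) :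
    0 < x t := by
  have hxc : ContinuousOn x (Ici t0) := fun s hs => (hx s hs).continuousAt.continuousWithinAt
  have hx' : Continuous fun s => x (max s t0) :=
    hxc.comp_continuous (by fun_prop) fun s => le_max_right s t0
  have hlin : ∀ s, t0 ≤ s → HasDerivAt x (x s * (σ s - x (max s t0) ^ 2)) s := fun s hs => by
    simpa [max_eq_left hs] using hx s hs
  rw [eq_mul_exp_integral_of_hasDerivAt (hσ.sub (hx'.pow 2)) hlin ht]
  positivity

lemma hasDerivAt_inv_sq_mul {F : ℝ → ℝ} {a t : ℝ} (hx : HasDerivAt x (x t * (a - x t ^ 2)) t)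
    (hF : HasDerivAt F (2 * a * F t) t) (hxt : x t ≠ 0) :
    HasDerivAt (fun r => (x r ^ 2)⁻¹ * F r) (2 * F t) t := by
  refine ((hx.pow 2).inv (pow_ne_zero 2 hxt)).mul hF |>.congr_deriv ?_
  simp only [Pi.pow_apply, Pi.inv_apply]
  field_simp
  ring

lemma inv_sq_mul_integratingFactor_sub_integral (hσ : Continuous σ) (hx0 : 0 < x t0)
    (hx : ∀ t, t0 ≤ t → HasDerivAt x (x t * (σ t - x t ^ 2)) t)
    (hint : ∀ t, IntegrableOn (integratingFactor σ t0) (Iic t)) {t : ℝ} (ht : t0 ≤ t) :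
    (x t ^ 2)⁻¹ * integratingFactor σ t0 t - 2 * ∫ k in Iic t, integratingFactor σ t0 k
      = (x t0 ^ 2)⁻¹ - 2 * ∫ k in Iic t0, integratingFactor σ t0 k := by
  have hderiv : ∀ s, t0 ≤ s →
      HasDerivAt (fun r => (x r ^ 2)⁻¹ * integratingFactor σ t0 r)
        (2 * integratingFactor σ t0 s) s := fun s hs =>
    hasDerivAt_inv_sq_mul (hx s hs) (hasDerivAt_integratingFactor hσ s)
      (pos_of_hasDerivAt_mul_sub_sq hσ hx0 hx hs).ne'
  have hFTC := intervalIntegral.integral_eq_sub_of_hasDerivAt_of_le ht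
    (fun s hs => (hderiv s hs.1).continuousAt.continuousWithinAt) (fun s hs => hderiv s hs.1.le)
    ((continuous_const.mul (continuous_integratingFactor hσ)).intervalIntegrable t0 t)
  rw [intervalIntegral.integral_const_mul,
    ← intervalIntegral.integral_Iic_sub_Iic (hint t0) (hint t), integratingFactor_self] at hFTC
  linarith

end Pitchfork

/-- Under `0 < σmin ≤ σ(t) ≤ σmax`, every solution of `ẋ = x(σ(t) - x²)` with `x₀ > 0`
is forwards attracted to the distinguished trajectory `γ₁(t) = √(γ(t)²)`. -/
theorem stmt3 (σ : ℝ → ℝ) (hσ : Continuous σ) (σmin σmax : ℝ)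
    (h1 : 0 < σmin) (h2 : ∀ t, σmin ≤ σ t) (h3 : ∀ t, σ t ≤ σmax)
    (γ1 : ℝ → ℝ)
    (hγ1 : ∀ t, γ1 t
      = Real.sqrt (1 / (2 * ∫ k in Set.Iic t, Real.exp (-2 * ∫ s in k..t, σ s))))
    (x0 t0 : ℝ) (hx0 : 0 < x0) (x : ℝ → ℝ) (hinit : x t0 = x0)
    (hode : ∀ t, t0 ≤ t → HasDerivAt x (x t * (σ t - (x t) ^ 2)) t) :
    Filter.Tendsto (fun t => x t - γ1 t) Filter.atTop (nhds 0) := by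
  set F := integratingFactor σ t0
  set J := fun t => ∫ k in Iic t, F k
  have hσmax : 0 < σmax := h1.trans_le ((h2 t0).trans (h3 t0))
  have hxt0 : 0 < x t0 := hinit ▸ hx0
  have hint : ∀ t, IntegrableOn F (Iic t) := integrableOn_integratingFactor_Iic hσ h1 h2
  have hγ : ∀ t, γ1 t = (√(2 * J t / F t))⁻¹ := fun t => by
    simp_rw [hγ1, ← sqrt_inv, exp_neg_two_integral_eq_div hσ _ t (t0 := t0), integral_div]
    field_simp
    rfl
  have hγ_lower : ∀ t, 1 / σmax ≤ 2 * J t / F t := fun t => by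
    have hJ := div_le_integral_integratingFactor hσ hσmax h3 (hint t)
    rw [div_le_iff₀ (by positivity)] at hJ
    rw [div_le_div_iff₀ hσmax (integratingFactor_pos t)]
    linarith
  have hdiff : Tendsto (fun t => (x t ^ 2)⁻¹ - 2 * J t / F t) atTop (𝓝 0) := by
    refine ((tendsto_const_nhds (x := (x t0 ^ 2)⁻¹ - 2 * J t0)).div_atTop
      (tendsto_integratingFactor_atTop (t0 := t0) hσ h1 h2)).congr' ?_
    filter_upwards [eventually_ge_atTop t0] with t ht
    have hconst := inv_sq_mul_integratingFactor_sub_integral hσ hxt0 hode hint ht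
    rw [eq_sub_iff_add_eq, ← add_div, div_eq_iff (integratingFactor_pos t).ne']
    linarith
  refine (tendsto_inv_sqrt_sub_inv_sqrt (by positivity) (.of_forall hγ_lower) hdiff).congr' ?_
  filter_upwards [eventually_ge_atTop t0] with t ht
  rw [hγ, sqrt_inv, inv_inv, sqrt_sq (pos_of_hasDerivAt_mul_sub_sq hσ hxt0 hode ht).le]
end

section
/- Under the assumption 0 < σ_min ≤ σ(t) ≤ σ_max, the distinguished trajectory γ_1 of ẋ = x(σ(t) − x²) is pullback attracting on x_0 > 0: for each fixed t, lim_{t_0 → −∞} (x(t, x_0, t_0)² − γ(t)²) = 0 for all x_0 > 0. -/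
open MeasureTheory Real Filter Set Topology

/-!
The explicit solution gives `x(t, x₀, t₀)² = 1 / D(t₀)` with
`D(t₀) = x₀⁻² e^{-2∫_{t₀}^t σ} + 2 ∫_{t₀}^t e^{-2∫_k^t σ} dk`. Since `σ ≥ σmin > 0`, the weight
`e^{-2∫_k^t σ}` is dominated by `e^{2 σmin (k - t)}`, so it tends to `0` as `k → -∞` and is
integrable on `(-∞, t]`. Hence `D(t₀) → 2 ∫_{-∞}^t e^{-2∫_k^t σ} dk = γ(t)⁻²`, a positive number,
and the reciprocals converge.
-/

section PullbackWeight

variable {σ : ℝ → ℝ} {c : ℝ}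

lemma mul_sub_le_integral_of_le {k t : ℝ} (hσ : IntervalIntegrable σ volume k t)
    (hσc : ∀ s, c ≤ σ s) (hkt : k ≤ t) : c * (t - k) ≤ ∫ s in k..t, σ s := by
  simpa [mul_comm] using
    intervalIntegral.integral_mono_on hkt intervalIntegrable_const hσ fun s _ => hσc s

lemma exp_neg_two_integral_le {k t : ℝ} (hσ : IntervalIntegrable σ volume k t)
    (hσc : ∀ s, c ≤ σ s) (hkt : k ≤ t) :
    exp (-2 * ∫ s in k..t, σ s) ≤ exp (-2 * c * t) * exp (2 * c * k) := by
  rw [← exp_add, exp_le_exp]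
  linarith [mul_sub_le_integral_of_le hσ hσc hkt]

lemma continuous_exp_neg_two_integral (hσ : Continuous σ) (t : ℝ) :
    Continuous fun k => exp (-2 * ∫ s in k..t, σ s) := by
  have hprim : Continuous fun k => ∫ s in k..t, σ s := by
    exact (intervalIntegral.continuous_primitive (fun a b => hσ.intervalIntegrable a b) t).neg
      |>.congr fun k => (intervalIntegral.integral_symm t k).symm
  fun_prop

lemma integrableOn_Iic_exp_neg_two_integral (hσ : Continuous σ) (hc : 0 < c)
    (hσc : ∀ s, c ≤ σ s) (t : ℝ) :
    IntegrableOn (fun k => exp (-2 * ∫ s in k..t, σ s)) (Iic t) := by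
  refine Integrable.mono' ((integrableOn_exp_mul_Iic (by positivity : 0 < 2 * c) t).const_mul
    (exp (-2 * c * t))) (continuous_exp_neg_two_integral hσ t).aestronglyMeasurable ?_
  refine (ae_restrict_iff' measurableSet_Iic).2 (Eventually.of_forall fun k hk => ?_)
  rw [norm_of_nonneg (exp_pos _).le]
  exact exp_neg_two_integral_le (hσ.intervalIntegrable k t) hσc hk

lemma tendsto_exp_neg_two_integral_atBot (hσ : Continuous σ) (hc : 0 < c)
    (hσc : ∀ s, c ≤ σ s) (t : ℝ) :
    Tendsto (fun k => exp (-2 * ∫ s in k..t, σ s)) atBot (𝓝 0) := by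
  have hlin : Tendsto (fun k => c * (t - k)) atBot atTop :=
    ((tendsto_atTop_add_const_left atBot t tendsto_neg_atBot_atTop).congr fun k =>
      (sub_eq_add_neg t k).symm).const_mul_atTop hc
  have hint : Tendsto (fun k => ∫ s in k..t, σ s) atBot atTop :=
    tendsto_atTop_mono' atBot ((eventually_le_atBot t).mono fun k hk =>
      mul_sub_le_integral_of_le (hσ.intervalIntegrable k t) hσc hk) hlin
  exact tendsto_exp_atBot.comp (hint.const_mul_atTop_of_neg (by norm_num))

end PullbackWeight

theorem stmt4_general (σ : ℝ → ℝ) (hσ : Continuous σ) (σmin : ℝ)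
    (h1 : 0 < σmin) (h2 : ∀ t, σmin ≤ σ t)
    (γsq : ℝ → ℝ)
    (hγ : ∀ t, γsq t = 1 / (2 * ∫ k in Set.Iic t, Real.exp (-2 * ∫ s in k..t, σ s)))
    (X2 : ℝ → ℝ → ℝ → ℝ)
    (hX2 : ∀ t x0 t0, X2 t x0 t0 =
      1 / ((1 / x0 ^ 2) * Real.exp (-2 * ∫ s in t0..t, σ s)
        + 2 * ∫ k in t0..t, Real.exp (-2 * ∫ s in k..t, σ s)))
    (t x0 : ℝ) :
    Filter.Tendsto (fun t0 => X2 t x0 t0 - γsq t) Filter.atBot (nhds 0) := by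
  have hint := integrableOn_Iic_exp_neg_two_integral hσ h1 h2 t
  have : NeZero (volume.restrict (Iic t)) := ⟨by simp [Measure.restrict_eq_zero]⟩
  have hpos : 0 < ∫ k in Iic t, exp (-2 * ∫ s in k..t, σ s) := integral_exp_pos hint
  have hden : Tendsto (fun t0 => 1 / x0 ^ 2 * exp (-2 * ∫ s in t0..t, σ s)
        + 2 * ∫ k in t0..t, exp (-2 * ∫ s in k..t, σ s))
      atBot (𝓝 (2 * ∫ k in Iic t, exp (-2 * ∫ s in k..t, σ s))) := by
    simpa only [mul_zero, zero_add, id] using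
      ((tendsto_exp_neg_two_integral_atBot hσ h1 h2 t).const_mul (1 / x0 ^ 2)).add
        ((intervalIntegral_tendsto_integral_Iic t hint tendsto_id).const_mul 2)
  simp only [hX2, hγ]
  simpa only [sub_self, Pi.div_apply] using
    ((tendsto_const_nhds (x := (1 : ℝ))).div hden (by positivity)).sub_const
      (1 / (2 * ∫ k in Iic t, exp (-2 * ∫ s in k..t, σ s)))

/-- Under `0 < σmin ≤ σ(t) ≤ σmax`, the distinguished trajectory of `ẋ = x(σ(t) - x²)` is
pullback attracting on `x₀ > 0`: for fixed `t`, `x(t,x₀,t₀)² - γ(t)² → 0` as `t₀ → -∞`. -/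
theorem stmt4 (σ : ℝ → ℝ) (hσ : Continuous σ) (σmin σmax : ℝ)
    (h1 : 0 < σmin) (h2 : ∀ t, σmin ≤ σ t) (h3 : ∀ t, σ t ≤ σmax)
    (γsq : ℝ → ℝ)
    (hγ : ∀ t, γsq t = 1 / (2 * ∫ k in Set.Iic t, Real.exp (-2 * ∫ s in k..t, σ s)))
    (X2 : ℝ → ℝ → ℝ → ℝ)
    (hX2 : ∀ t x0 t0, X2 t x0 t0 =
      1 / ((1 / x0 ^ 2) * Real.exp (-2 * ∫ s in t0..t, σ s)
        + 2 * ∫ k in t0..t, Real.exp (-2 * ∫ s in k..t, σ s)))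
    (t x0 : ℝ) (hx0 : 0 < x0) :
    Filter.Tendsto (fun t0 => X2 t x0 t0 - γsq t) Filter.atBot (nhds 0) :=
  stmt4_general σ hσ σmin h1 h2 γsq hγ X2 hX2 t x0
end

section
/- For the ODE ẋ = x(σ(t) − x²) with σ continuous and σ(t) ≤ σ_max < 0 for all t ≤ t*, the trivial solution is globally pullback stable on (−∞, t*]: for every x_0 ∈ ℝ and every t ≤ t*, lim_{t_0 → −∞} x(t, x_0, t_0) = 0. -/
/-!
Along a solution, `ẋ = x · (σ(t) - x²)` with the factor `σ(t) - x² ≤ σ(t) ≤ σmax`, so Grönwall's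
inequality applied to `x²` gives `|x(t, x₀, t₀)| ≤ |x₀| e^{σmax (t - t₀)}` for `t₀ ≤ t ≤ t*`.
Since `σmax < 0`, this bound tends to `0` as `t₀ → -∞`.
-/

open Real Set Filter Topology

theorem abs_le_mul_exp_of_hasDerivAt_mul {f g : ℝ → ℝ} {c a b : ℝ} (hab : a ≤ b)
    (hf : ∀ s ∈ Icc a b, HasDerivAt f (f s * g s) s) (hg : ∀ s ∈ Ico a b, g s ≤ c) :
    |f b| ≤ |f a| * exp (c * (b - a)) := by
  have hsq : ∀ s ∈ Icc a b, HasDerivAt (fun s => f s ^ 2) (2 * f s ^ 2 * g s) s := fun s hs =>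
    ((hf s hs).fun_pow 2).congr_deriv (by push_cast; ring)
  have hgronwall : f b ^ 2 ≤ gronwallBound (f a ^ 2) (2 * c) 0 (b - a) :=
    le_gronwallBound_of_liminf_deriv_right_le
      (fun s hs => (hsq s hs).continuousAt.continuousWithinAt)
      (fun s hs _ hr => (hsq s (Ico_subset_Icc_self hs)).hasDerivWithinAt.liminf_right_slope_le hr)
      le_rfl
      (fun s hs => by nlinarith [hg s hs, sq_nonneg (f s)])
      b (right_mem_Icc.2 hab)
  have hexp : exp (2 * c * (b - a)) = exp (c * (b - a)) ^ 2 := by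
    rw [← exp_nat_mul]
    ring_nf
  rw [gronwallBound_ε0, hexp, ← mul_pow] at hgronwall
  simpa [abs_of_nonneg (exp_pos _).le] using sq_le_sq.1 hgronwall

theorem tendsto_mul_exp_mul_sub_atBot {c : ℝ} (hc : c < 0) (C t : ℝ) :
    Tendsto (fun t₀ => C * exp (c * (t - t₀))) atBot (𝓝 0) := by
  have hlin : Tendsto (fun t₀ => c * (t - t₀)) atBot atBot := by
    have := tendsto_atBot_add_const_left _ (c * t) (tendsto_id.const_mul_atBot (neg_pos.2 hc))
    convert this using 2 with t₀
    simp only [id]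
    ring
  simpa using (tendsto_exp_atBot.comp hlin).const_mul C

theorem stmt5_general (σ : ℝ → ℝ) (σmax tstar : ℝ) (hσmax : σmax < 0)
    (hb : ∀ t, t ≤ tstar → σ t ≤ σmax)
    (x : ℝ → ℝ → ℝ → ℝ)
    (hinit : ∀ x0 t0, x t0 x0 t0 = x0)
    (hode : ∀ x0 t0 t, t0 ≤ t →
      HasDerivAt (fun s => x s x0 t0) (x t x0 t0 * (σ t - (x t x0 t0) ^ 2)) t) :
    ∀ x0 t, t ≤ tstar → Filter.Tendsto (fun t0 => x t x0 t0) Filter.atBot (nhds 0) := by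
  intro x0 t ht
  have hdecay : ∀ t0 ≤ t, |x t x0 t0| ≤ |x0| * exp (σmax * (t - t0)) := fun t0 ht0 => by
    simpa only [hinit] using abs_le_mul_exp_of_hasDerivAt_mul (f := fun s => x s x0 t0) ht0
      (fun s hs => hode x0 t0 s hs.1)
      (fun s hs => by linarith [hb s (hs.2.le.trans ht), sq_nonneg (x s x0 t0)])
  refine squeeze_zero_norm' ?_ (tendsto_mul_exp_mul_sub_atBot hσmax |x0| t)
  filter_upwards [eventually_le_atBot t] with t0 ht0
  exact hdecay t0 ht0

/-- If `σ(t) ≤ σmax < 0` for all `t ≤ t*`, the trivial solution of `ẋ = x(σ(t) - x²)` is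
globally pullback stable on `(-∞, t*]`: for every `x₀` and `t ≤ t*`,
`x(t, x₀, t₀) → 0` as `t₀ → -∞`. -/
theorem stmt5 (σ : ℝ → ℝ) (hσ : Continuous σ) (σmax tstar : ℝ) (hσmax : σmax < 0)
    (hb : ∀ t, t ≤ tstar → σ t ≤ σmax)
    (x : ℝ → ℝ → ℝ → ℝ)
    (hinit : ∀ x0 t0, x t0 x0 t0 = x0)
    (hode : ∀ x0 t0 t, t0 ≤ t →
      HasDerivAt (fun s => x s x0 t0) (x t x0 t0 * (σ t - (x t x0 t0) ^ 2)) t) :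
    ∀ x0 t, t ≤ tstar → Filter.Tendsto (fun t0 => x t x0 t0) Filter.atBot (nhds 0) :=
  stmt5_general σ σmax tstar hσmax hb x hinit hode
end

section
/- For the ODE ẋ = x(σ(t) − x²) with σ continuous and σ(t) ≤ σ_max < 0 for all t ≥ t**, the trivial solution is globally asymptotically stable on [t**, ∞): for every x_0 ∈ ℝ and every t_0 ≥ t**, lim_{t→∞} x(t, x_0, t_0) = 0. -/
/-!
Along a solution, `u = x²` satisfies `u' = 2x²(σ - x²) ≤ 2σmax·u` once `t ≥ t**`, so Grönwall's
inequality gives `x(t)² ≤ x(t₀)² e^{2σmax (t - t₀)}`, which tends to `0` because `σmax < 0`.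
-/

open Filter Set Topology Real

theorem le_mul_exp_of_hasDerivAt_le_mul {u u' : ℝ → ℝ} {c a : ℝ}
    (hu : ∀ t, a ≤ t → HasDerivAt u (u' t) t) (hle : ∀ t, a ≤ t → u' t ≤ c * u t)
    {t : ℝ} (ht : a ≤ t) : u t ≤ u a * exp (c * (t - a)) := by
  have hcont : ContinuousOn u (Icc a t) := fun s hs =>
    (hu s hs.1).continuousAt.continuousWithinAt
  have key := le_gronwallBound_of_liminf_deriv_right_le hcont
    (fun s hs _ hr => (hu s hs.1).hasDerivWithinAt.liminf_right_slope_le hr) le_rfl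
    (fun s hs => (add_zero (c * u s)).symm ▸ hle s hs.1) t ⟨ht, le_rfl⟩
  rwa [gronwallBound_ε0] at key

theorem tendsto_zero_of_hasDerivAt_le_mul {u u' : ℝ → ℝ} {c a : ℝ} (hc : c < 0)
    (hu : ∀ t, a ≤ t → HasDerivAt u (u' t) t) (hle : ∀ t, a ≤ t → u' t ≤ c * u t)
    (hnonneg : ∀ t, a ≤ t → 0 ≤ u t) : Tendsto u atTop (𝓝 0) := by
  have hexp : Tendsto (fun t => u a * exp (c * (t - a))) atTop (𝓝 0) := by
    have hlin : Tendsto (fun t => c * (t - a)) atTop atBot := by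
      simpa [sub_eq_add_neg] using (tendsto_const_mul_atBot_of_neg hc).mpr
        (tendsto_atTop_add_const_right _ (-a) tendsto_id)
    simpa using (tendsto_exp_atBot.comp hlin).const_mul (u a)
  exact tendsto_of_tendsto_of_tendsto_of_le_of_le' tendsto_const_nhds hexp
    (eventually_ge_atTop a |>.mono hnonneg)
    (eventually_ge_atTop a |>.mono fun t ht => le_mul_exp_of_hasDerivAt_le_mul hu hle ht)

theorem stmt6_general (σ : ℝ → ℝ) (σmax tss : ℝ) (hσmax : σmax < 0)
    (hb : ∀ t, tss ≤ t → σ t ≤ σmax)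
    (t0 : ℝ) (ht0 : tss ≤ t0) (x : ℝ → ℝ)
    (hode : ∀ t, t0 ≤ t → HasDerivAt x (x t * (σ t - (x t) ^ 2)) t) :
    Filter.Tendsto x Filter.atTop (nhds 0) := by
  have hsq : Tendsto (fun t => x t ^ 2) atTop (𝓝 0) := by
    refine tendsto_zero_of_hasDerivAt_le_mul (by linarith : 2 * σmax < 0)
      (fun t ht => (hode t ht).pow 2) (fun t ht => ?_) (fun t _ => sq_nonneg (x t))
    have hσt := hb t (ht0.trans ht)
    have hderiv_le : 2 * x t * (x t * (σ t - x t ^ 2)) ≤ 2 * σmax * x t ^ 2 := by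
      nlinarith [sq_nonneg (x t), sq_nonneg (x t ^ 2)]
    simpa using hderiv_le
  have habs : Tendsto (fun t => |x t|) atTop (𝓝 0) := by
    simpa [sqrt_sq_eq_abs] using hsq.sqrt
  exact (tendsto_zero_iff_abs_tendsto_zero x).mpr habs

/-- If `σ(t) ≤ σmax < 0` for all `t ≥ t**`, the trivial solution of `ẋ = x(σ(t) - x²)` is
globally asymptotically stable on `[t**, ∞)`: every solution starting at `t₀ ≥ t**`
converges to `0` as `t → ∞`. -/
theorem stmt6 (σ : ℝ → ℝ) (hσ : Continuous σ) (σmax tss : ℝ) (hσmax : σmax < 0)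
    (hb : ∀ t, tss ≤ t → σ t ≤ σmax)
    (x0 t0 : ℝ) (ht0 : tss ≤ t0) (x : ℝ → ℝ)
    (hinit : x t0 = x0)
    (hode : ∀ t, t0 ≤ t → HasDerivAt x (x t * (σ t - (x t) ^ 2)) t) :
    Filter.Tendsto x Filter.atTop (nhds 0) :=
  stmt6_general σ σmax tss hσmax hb t0 ht0 x hode
end

section
/- Suppose the strain acceleration tensor M̂(t) restricted to the zero-strain set Z(t) is positive definite for all t in an interval I (i.e. the trajectory is in the hyperbolic region). Then the set Ψ⁺ of nondecreasing solutions is forward-time invariant: if a solution ξ of ξ̇ = A(t)ξ satisfies d/dm ‖X(m,t*)ξ(t*)‖ |_{m=t*} ≥ 0 at some t* ∈ I, then d/dm ‖ξ(m)‖ ≥ 0 at every t ∈ I with t ≥ t*. -/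
/-!
Write `g(t) = ⟨ξ, Ŝ(t) ξ⟩ = ½ d/dt ‖ξ(t)‖²`; then `g' = ⟨ξ, M̂ ξ⟩`. If `g(t*) ≥ 0` but `g(t) < 0`
for some later `t`, let `τ` be the last zero of `g` before `t`, so `g < 0` on `(τ, t]`. If
`ξ(τ) ≠ 0`, then `ξ(τ)` lies in the zero-strain set, so `g'(τ) > 0` and `g` is positive just after
`τ`. If `ξ(τ) = 0`, then `‖ξ‖²` vanishes at `τ` and strictly decreases on `[τ, t]`, so it is
negative at `t`. Both are absurd.
-/

open Matrix Set Filter Topology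

section Derivatives

variable {m n : Type*} [Fintype n] {t : ℝ}

theorem HasDerivAt.dotProduct {u v : ℝ → n → ℝ} {u' v' : n → ℝ} (hu : HasDerivAt u u' t)
    (hv : HasDerivAt v v' t) :
    HasDerivAt (fun s => u s ⬝ᵥ v s) (u' ⬝ᵥ v t + u t ⬝ᵥ v') t := by
  simp only [_root_.dotProduct, ← Finset.sum_add_distrib]
  exact HasDerivAt.fun_sum fun i _ => (hasDerivAt_pi.1 hu i).fun_mul (hasDerivAt_pi.1 hv i)

theorem hasDerivAt_mulVec {S : ℝ → Matrix m n ℝ} {S' : Matrix m n ℝ} {v : ℝ → n → ℝ}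
    {v' : n → ℝ} (hS : ∀ i j, HasDerivAt (fun s => S s i j) (S' i j) t)
    (hv : HasDerivAt v v' t) :
    HasDerivAt (fun s => S s *ᵥ v s) (S' *ᵥ v t + S t *ᵥ v') t :=
  hasDerivAt_pi.2 fun i => (hasDerivAt_pi.2 (hS i)).dotProduct hv

theorem hasDerivAt_dotProduct_self_of_linear {A S : Matrix n n ℝ} {ξ : ℝ → n → ℝ}
    (hS : S = (1 / 2 : ℝ) • (A + Aᵀ)) (hξ : HasDerivAt ξ (A *ᵥ ξ t) t) :
    HasDerivAt (fun s => ξ s ⬝ᵥ ξ s) (2 * (ξ t ⬝ᵥ S *ᵥ ξ t)) t := by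
  convert hξ.dotProduct hξ using 1
  rw [hS, smul_mulVec, add_mulVec, dotProduct_smul, dotProduct_add, dotProduct_mulVec _ Aᵀ,
    vecMul_transpose, dotProduct_comm (ξ t), smul_eq_mul]
  ring

theorem hasDerivAt_dotProduct_strain {A A' S M : ℝ → Matrix n n ℝ} {ξ : ℝ → n → ℝ}
    (hA' : ∀ i j, HasDerivAt (fun s => A s i j) (A' t i j) t)
    (hS : ∀ s, S s = (1 / 2 : ℝ) • (A s + (A s)ᵀ))
    (hM : M t = (1 / 2 : ℝ) • (A' t + (A' t)ᵀ) + S t * A t + (A t)ᵀ * S t)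
    (hξ : HasDerivAt ξ (A t *ᵥ ξ t) t) :
    HasDerivAt (fun s => ξ s ⬝ᵥ S s *ᵥ ξ s) (ξ t ⬝ᵥ M t *ᵥ ξ t) t := by
  have hS' : ∀ i j, HasDerivAt (fun s => S s i j) (((1 / 2 : ℝ) • (A' t + (A' t)ᵀ)) i j) t := by
    intro i j
    simp only [hS, Matrix.smul_apply, Matrix.add_apply, transpose_apply, smul_eq_mul]
    exact ((hA' i j).add (hA' j i)).const_mul _
  convert hξ.dotProduct (hasDerivAt_mulVec hS' hξ) using 1
  rw [hM, add_mulVec, add_mulVec, dotProduct_add, dotProduct_add, dotProduct_add,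
    ← mulVec_mulVec, ← mulVec_mulVec, dotProduct_mulVec (ξ t) (A t)ᵀ, vecMul_transpose]
  ring

end Derivatives

theorem exists_zero_forall_Ioc_neg {g : ℝ → ℝ} {a b : ℝ} (hab : a ≤ b)
    (hg : ContinuousOn g (Icc a b)) (ha : 0 ≤ g a) (hb : g b < 0) :
    ∃ τ ∈ Ico a b, g τ = 0 ∧ ∀ s ∈ Ioc τ b, g s < 0 := by
  set Z := Icc a b ∩ g ⁻¹' Ici 0
  have hZbdd : BddAbove Z := bddAbove_Icc.mono inter_subset_left
  have hτ : sSup Z ∈ Z := (hg.preimage_isClosed_of_isClosed isClosed_Icc isClosed_Ici).csSup_mem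
    ⟨a, left_mem_Icc.2 hab, ha⟩ hZbdd
  obtain ⟨⟨haτ, hτb⟩, hgτ⟩ := hτ
  have hafter : ∀ s ∈ Ioc (sSup Z) b, g s < 0 := fun s hs => not_le.1 fun hgs =>
    hs.1.not_ge (le_csSup hZbdd ⟨⟨haτ.trans hs.1.le, hs.2⟩, hgs⟩)
  obtain ⟨c, hc, hgc⟩ := intermediate_value_Icc' hτb (hg.mono (Icc_subset_Icc_left haτ))
    ⟨hb.le, hgτ⟩
  have hcτ : c = sSup Z := le_antisymm (le_csSup hZbdd ⟨⟨haτ.trans hc.1, hc.2⟩, hgc.ge⟩) hc.1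
  refine ⟨sSup Z, ⟨haτ, hτb.lt_of_ne fun hτb => hb.not_ge (hτb ▸ hgτ)⟩, hcτ ▸ hgc, hafter⟩

theorem HasDerivAt.exists_mem_Ioc_pos {g : ℝ → ℝ} {g' τ b : ℝ} (hg : HasDerivAt g g' τ)
    (hg' : 0 < g') (hτ : g τ = 0) (hτb : τ < b) : ∃ s ∈ Ioc τ b, 0 < g s := by
  have hslope : ∀ᶠ s in 𝓝[>] τ, 0 < slope g τ s :=
    ((hasDerivAt_iff_tendsto_slope.1 hg).mono_left (nhdsGT_le_nhdsNE τ)).eventually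
      (eventually_gt_nhds hg')
  obtain ⟨s, hs, hgs⟩ := (Eventually.and (Ioc_mem_nhdsGT hτb) hslope).exists
  exact ⟨s, hs, pos_of_slope_pos hs.1 hgs hτ⟩

theorem stmt15_general (A A' : ℝ → Matrix (Fin 2) (Fin 2) ℝ)
    (hA' : ∀ t i j, HasDerivAt (fun s => A s i j) (A' t i j) t)
    (S Mhat : ℝ → Matrix (Fin 2) (Fin 2) ℝ)
    (hS : ∀ t, S t = (1 / 2 : ℝ) • (A t + (A t)ᵀ))
    (hM : ∀ t, Mhat t = (1 / 2 : ℝ) • (A' t + (A' t)ᵀ) + S t * A t + (A t)ᵀ * S t)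
    (I : Set ℝ) (hI : Convex ℝ I)
    (hpos : ∀ t ∈ I, ∀ z : Fin 2 → ℝ, z ≠ 0 → z ⬝ᵥ (S t).mulVec z = 0 →
      0 < z ⬝ᵥ (Mhat t).mulVec z)
    (ξ : ℝ → Fin 2 → ℝ)
    (hξ : ∀ t ∈ I, HasDerivAt ξ ((A t).mulVec (ξ t)) t)
    (tstar : ℝ) (htstar : tstar ∈ I)
    (h0 : 0 ≤ ξ tstar ⬝ᵥ (S tstar).mulVec (ξ tstar)) :
    ∀ t ∈ I, tstar ≤ t → 0 ≤ ξ t ⬝ᵥ (S t).mulVec (ξ t) := by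
  intro t ht htt
  by_contra! hneg
  have hsub : Icc tstar t ⊆ I := hI.ordConnected.out htstar ht
  have hg : ∀ s ∈ I, HasDerivAt (fun s => ξ s ⬝ᵥ S s *ᵥ ξ s) (ξ s ⬝ᵥ Mhat s *ᵥ ξ s) s :=
    fun s hs => hasDerivAt_dotProduct_strain (hA' s) hS (hM s) (hξ s hs)
  obtain ⟨τ, hτ, hgτ, hafter⟩ := exists_zero_forall_Ioc_neg htt
    (fun s hs => (hg s (hsub hs)).continuousAt.continuousWithinAt) h0 hneg
  have hτI : τ ∈ I := hsub (Ico_subset_Icc_self hτ)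
  by_cases hz : ξ τ = 0
  · have hτsub : Icc τ t ⊆ I := (Icc_subset_Icc_left hτ.1).trans hsub
    have hnorm : ∀ s ∈ Icc τ t, HasDerivAt (fun s => ξ s ⬝ᵥ ξ s) (2 * (ξ s ⬝ᵥ S s *ᵥ ξ s)) s :=
      fun s hs => hasDerivAt_dotProduct_self_of_linear (hS s) (hξ s (hτsub hs))
    have hanti : StrictAntiOn (fun s => ξ s ⬝ᵥ ξ s) (Icc τ t) := by
      refine strictAntiOn_of_deriv_neg (convex_Icc τ t)
        (fun s hs => (hnorm s hs).continuousAt.continuousWithinAt) fun s hs => ?_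
      rw [interior_Icc] at hs
      rw [(hnorm s (Ioo_subset_Icc_self hs)).deriv]
      linarith [hafter s (Ioo_subset_Ioc_self hs)]
    have hlt := hanti (left_mem_Icc.2 hτ.2.le) (right_mem_Icc.2 hτ.2.le) hτ.2
    simp only [hz, dotProduct_zero] at hlt
    exact hlt.not_ge (dotProduct_self_star_nonneg (ξ t))
  · obtain ⟨s, hs, hgs⟩ := (hg τ hτI).exists_mem_Ioc_pos (hpos τ hτI _ hz hgτ) hgτ hτ.2
    exact (hafter s hs).not_gt hgs

/-- If the strain acceleration tensor `M̂(t)` is positive definite on the zero-strain set for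
all `t` in an interval `I` (hyperbolic region), then the set `Ψ⁺` of nondecreasing solutions
is forward-time invariant: a solution of `ξ̇ = A(t)ξ` with nondecreasing norm at `t* ∈ I`
has nondecreasing norm at every later `t ∈ I`. -/
theorem stmt15 (A A' : ℝ → Matrix (Fin 2) (Fin 2) ℝ)
    (hA' : ∀ t i j, HasDerivAt (fun s => A s i j) (A' t i j) t)
    (S Mhat : ℝ → Matrix (Fin 2) (Fin 2) ℝ)
    (hS : ∀ t, S t = (1 / 2 : ℝ) • (A t + (A t)ᵀ))
    (hM : ∀ t, Mhat t = (1 / 2 : ℝ) • (A' t + (A' t)ᵀ) + S t * A t + (A t)ᵀ * S t)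
    (I : Set ℝ) (hI : Convex ℝ I)
    (hInd : ∀ t ∈ I, (∃ u : Fin 2 → ℝ, 0 < u ⬝ᵥ (S t).mulVec u) ∧
      (∃ v : Fin 2 → ℝ, v ⬝ᵥ (S t).mulVec v < 0))
    (hpos : ∀ t ∈ I, ∀ z : Fin 2 → ℝ, z ≠ 0 → z ⬝ᵥ (S t).mulVec z = 0 →
      0 < z ⬝ᵥ (Mhat t).mulVec z)
    (ξ : ℝ → Fin 2 → ℝ)
    (hξ : ∀ t ∈ I, HasDerivAt ξ ((A t).mulVec (ξ t)) t)
    (tstar : ℝ) (htstar : tstar ∈ I)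
    (h0 : 0 ≤ ξ tstar ⬝ᵥ (S tstar).mulVec (ξ tstar)) :
    ∀ t ∈ I, tstar ≤ t → 0 ≤ ξ t ⬝ᵥ (S t).mulVec (ξ t) :=
  stmt15_general A A' hA' S Mhat hS hM I hI hpos ξ hξ tstar htstar h0
end
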